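/- arXiv:1407.4993 — 6 statements merged into one kernel-verified Lean document; each statement's English description precedes it below -/
import Mathlib

section
/- Let ℓ, ℓ′ ∈ ℝⁿ be ordered generic length vectors. Then ℓ and ℓ′ lie in the same chamber (the same connected component of ℋ) if and only if S_k(ℓ) = S_k(ℓ′) for all k = 0, 1, …, n−3. -/
/-! For every `J` the function `x ↦ ∑_{j ∈ J} x j - ∑_{j ∉ J} x j` is linear and does not vanish
on `ℋ`, so by the intermediate value theorem its sign is constant on each chamber. Conversely, if
two points of `ℋ` have the same short sets, the segment joining them stays in `ℋ`, because each
condition "`J` is short" cuts out an open half-space. Hence chambers are exactly the classes of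
vectors with the same short sets.

For ordered vectors the short sets are determined by those containing the index `n`: for
generic `ℓ` a set without `n` is short iff its complement, which contains `n`, is not short, and
a set containing `n` with at least `n - 1` elements is never short, since `ℓ_n` dominates the
single remaining entry. -/

noncomputable section

/-- `ℝ^d` with the Euclidean norm. -/
abbrev Euc (d : ℕ) := EuclideanSpace ℝ (Fin d)

/-- A subset `J` is `ℓ`-short if the sum of its entries is less than the sum over the complement. -/
def Short {n : ℕ} (ℓ : Fin n → ℝ) (J : Finset (Fin n)) : Prop :=
  ∑ j ∈ J, ℓ j < ∑ j ∈ Jᶜ, ℓ j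

/-- A subset is `ℓ`-long if its complement is `ℓ`-short. -/
def Long {n : ℕ} (ℓ : Fin n → ℝ) (J : Finset (Fin n)) : Prop := Short ℓ Jᶜ

/-- `ℓ` is generic if every subset is `ℓ`-short or `ℓ`-long. -/
def Generic {n : ℕ} (ℓ : Fin n → ℝ) : Prop := ∀ J : Finset (Fin n), Short ℓ J ∨ Long ℓ J

/-- `ℓ` is `d`-regular if the intersection of all `ℓ`-long subsets of cardinality `d-1`
is nonempty (with the convention that the empty intersection is everything). -/
def DRegular (d : ℕ) {n : ℕ} (ℓ : Fin n → ℝ) : Prop :=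
  ∃ i : Fin n, ∀ J : Finset (Fin n), J.card = d - 1 → Long ℓ J → i ∈ J

/-- The complement in `ℝⁿ_{>0}` of all the hyperplanes `H_J`; its connected components
are the chambers. -/
def Hcal (n : ℕ) : Set (Fin n → ℝ) :=
  {x | (∀ i, 0 < x i) ∧ ∀ J : Finset (Fin n), ∑ j ∈ J, x j ≠ ∑ j ∈ Jᶜ, x j}

/-- `S_k(ℓ)`: the `ℓ`-short subsets of cardinality `k+1` containing the last index. -/
def Sk (n : ℕ) (hn : 0 < n) (k : ℕ) (ℓ : Fin n → ℝ) : Set (Finset (Fin n)) :=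
  {J | (⟨n - 1, Nat.sub_lt hn one_pos⟩ : Fin n) ∈ J ∧ J.card = k + 1 ∧ Short ℓ J}

open Finset

section Chambers

variable {n : ℕ}

def imbalance (J : Finset (Fin n)) : (Fin n → ℝ) →ₗ[ℝ] ℝ :=
  ∑ j ∈ J, LinearMap.proj j - ∑ j ∈ Jᶜ, LinearMap.proj j

lemma imbalance_apply (J : Finset (Fin n)) (x : Fin n → ℝ) :
    imbalance J x = ∑ j ∈ J, x j - ∑ j ∈ Jᶜ, x j := by
  simp [imbalance]

lemma short_iff_imbalance_neg {x : Fin n → ℝ} {J : Finset (Fin n)} :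
    Short x J ↔ imbalance J x < 0 := by
  rw [imbalance_apply, sub_neg, Short]

lemma short_or_long_iff_sum_ne {x : Fin n → ℝ} {J : Finset (Fin n)} :
    Short x J ∨ Long x J ↔ ∑ j ∈ J, x j ≠ ∑ j ∈ Jᶜ, x j := by
  rw [Long, Short, Short, compl_compl, ne_iff_lt_or_gt]

lemma mem_Hcal_iff {x : Fin n → ℝ} : x ∈ Hcal n ↔ (∀ i, 0 < x i) ∧ Generic x := by
  simp only [Hcal, Generic, short_or_long_iff_sum_ne, Set.mem_ofPred_eq]

lemma Short.not_short_compl {x : Fin n → ℝ} {J : Finset (Fin n)} (h : Short x J) :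
    ¬ Short x Jᶜ := by
  rw [Short, compl_compl, not_lt]
  exact h.le

lemma convex_setOf_short (J : Finset (Fin n)) : Convex ℝ {x : Fin n → ℝ | Short x J} := by
  simpa only [short_iff_imbalance_neg] using convex_halfSpace_lt (imbalance J).isLinear 0

lemma segment_subset_Hcal {x y : Fin n → ℝ} (hx : x ∈ Hcal n) (hy : y ∈ Hcal n)
    (hxy : ∀ J, Short x J ↔ Short y J) : segment ℝ x y ⊆ Hcal n := by
  intro z hz
  rw [mem_Hcal_iff] at hx hy ⊢
  refine ⟨fun i => ?_, fun J => ?_⟩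
  · have hpos : Convex ℝ (Set.univ.pi fun _ : Fin n => Set.Ioi (0 : ℝ)) :=
      convex_pi fun _ _ => convex_Ioi 0
    exact hpos.segment_subset (fun i _ => hx.1 i) (fun i _ => hy.1 i) hz i (Set.mem_univ i)
  · rcases hx.2 J with hJ | hJ
    · exact Or.inl <| (convex_setOf_short J).segment_subset hJ ((hxy J).1 hJ) hz
    · exact Or.inr <| (convex_setOf_short Jᶜ).segment_subset hJ ((hxy Jᶜ).1 hJ) hz

lemma Short.of_mem_connectedComponentIn_Hcal {x y z : Fin n → ℝ} {J : Finset (Fin n)}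
    (hy : y ∈ connectedComponentIn (Hcal n) x) (hz : z ∈ connectedComponentIn (Hcal n) x)
    (hJ : Short y J) : Short z J := by
  rw [short_iff_imbalance_neg] at hJ ⊢
  by_contra! hzJ
  obtain ⟨w, hw, hw0⟩ := isPreconnected_connectedComponentIn.intermediate_value hy hz
    (imbalance J).continuous_of_finiteDimensional.continuousOn ⟨hJ.le, hzJ⟩
  refine (connectedComponentIn_subset _ _ hw).2 J ?_
  rwa [imbalance_apply, sub_eq_zero] at hw0

lemma mem_connectedComponentIn_Hcal_iff {x y : Fin n → ℝ} (hx : x ∈ Hcal n)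
    (hy : y ∈ Hcal n) :
    y ∈ connectedComponentIn (Hcal n) x ↔ ∀ J, Short x J ↔ Short y J := by
  refine ⟨fun h J => ⟨?_, ?_⟩, fun h => ?_⟩
  · exact Short.of_mem_connectedComponentIn_Hcal (mem_connectedComponentIn hx) h
  · exact Short.of_mem_connectedComponentIn_Hcal h (mem_connectedComponentIn hx)
  · exact (convex_segment x y).isPreconnected.subset_connectedComponentIn
      (left_mem_segment ℝ x y) (segment_subset_Hcal hx hy h) (right_mem_segment ℝ x y)

end Chambers

section ShortSets

variable {n : ℕ} (hn : 0 < n) {ℓ ℓ' : Fin n → ℝ}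

lemma not_short_of_last_mem_of_card_ge (hpos : ∀ i, 0 < ℓ i) (hord : Monotone ℓ)
    {J : Finset (Fin n)} (hlast : (⟨n - 1, Nat.sub_lt hn one_pos⟩ : Fin n) ∈ J)
    (hcard : n - 1 ≤ J.card) : ¬ Short ℓ J := by
  set last : Fin n := ⟨n - 1, Nat.sub_lt hn one_pos⟩
  have hcompl : #Jᶜ ≤ 1 := by
    rw [card_compl, Fintype.card_fin]
    omega
  have hle_last : ∀ i ∈ Jᶜ, ℓ i ≤ ℓ last := fun i _ => hord (Fin.mk_le_mk.2 (by omega))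
  rw [Short, not_lt]
  calc ∑ j ∈ Jᶜ, ℓ j ≤ #Jᶜ • ℓ last := sum_le_card_nsmul _ _ _ hle_last
    _ ≤ 1 • ℓ last := nsmul_le_nsmul_left (hpos last).le hcompl
    _ = ℓ last := one_nsmul _
    _ ≤ ∑ j ∈ J, ℓ j := single_le_sum (fun i _ => (hpos i).le) hlast

lemma Short.of_Sk_eq_of_last_mem (hpos : ∀ i, 0 < ℓ i) (hord : Monotone ℓ)
    (hSk : ∀ k ≤ n - 3, Sk n hn k ℓ = Sk n hn k ℓ') {J : Finset (Fin n)}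
    (hlast : (⟨n - 1, Nat.sub_lt hn one_pos⟩ : Fin n) ∈ J) (hJ : Short ℓ J) :
    Short ℓ' J := by
  have hcard : J.card ≤ n - 2 := by
    by_contra! h
    exact not_short_of_last_mem_of_card_ge hn hpos hord hlast (by omega) hJ
  have hne : 0 < J.card := card_pos.2 ⟨_, hlast⟩
  have hmem : J ∈ Sk n hn (J.card - 1) ℓ := ⟨hlast, by omega, hJ⟩
  rw [hSk _ (by omega)] at hmem
  exact hmem.2.2

lemma Short.of_Sk_eq (hpos : ∀ i, 0 < ℓ i) (hpos' : ∀ i, 0 < ℓ' i)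
    (hord : Monotone ℓ) (hord' : Monotone ℓ') (hgen' : Generic ℓ')
    (hSk : ∀ k ≤ n - 3, Sk n hn k ℓ = Sk n hn k ℓ') {J : Finset (Fin n)}
    (hJ : Short ℓ J) : Short ℓ' J := by
  by_cases hlast : (⟨n - 1, Nat.sub_lt hn one_pos⟩ : Fin n) ∈ J
  · exact hJ.of_Sk_eq_of_last_mem hn hpos hord hSk hlast
  · refine (hgen' J).resolve_right fun hlong => hJ.not_short_compl ?_
    exact hlong.of_Sk_eq_of_last_mem hn hpos' hord' (fun k hk => (hSk k hk).symm)
      (mem_compl.2 hlast)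

lemma forall_short_iff_iff_Sk_eq (hpos : ∀ i, 0 < ℓ i) (hpos' : ∀ i, 0 < ℓ' i)
    (hord : Monotone ℓ) (hord' : Monotone ℓ') (hgen : Generic ℓ) (hgen' : Generic ℓ') :
    (∀ J, Short ℓ J ↔ Short ℓ' J) ↔ ∀ k ≤ n - 3, Sk n hn k ℓ = Sk n hn k ℓ' := by
  refine ⟨fun h k _ => ?_, fun hSk J => ⟨?_, ?_⟩⟩
  · ext J
    simp only [Sk, Set.mem_ofPred_eq, h J]
  · exact Short.of_Sk_eq hn hpos hpos' hord hord' hgen' hSk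
  · exact Short.of_Sk_eq hn hpos' hpos hord' hord hgen fun k hk => (hSk k hk).symm

end ShortSets

/-- Two ordered generic length vectors `ℓ, ℓ'` lie in the same chamber
(connected component of `ℋ`) iff `S_k(ℓ) = S_k(ℓ')` for all `k = 0, …, n-3`. -/
theorem stmt2 (n : ℕ) (hn : 0 < n) (ℓ ℓ' : Fin n → ℝ)
    (hpos : ∀ i, 0 < ℓ i) (hpos' : ∀ i, 0 < ℓ' i)
    (hord : Monotone ℓ) (hord' : Monotone ℓ')
    (hgen : Generic ℓ) (hgen' : Generic ℓ') :
    ℓ' ∈ connectedComponentIn (Hcal n) ℓ ↔ ∀ k ≤ n - 3, Sk n hn k ℓ = Sk n hn k ℓ' := by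
  rw [mem_connectedComponentIn_Hcal_iff (mem_Hcal_iff.2 ⟨hpos, hgen⟩)
    (mem_Hcal_iff.2 ⟨hpos', hgen'⟩)]
  exact forall_short_iff_iff_Sk_eq hn hpos hpos' hord hord' hgen hgen'
end
end

section
/- Let d ≥ 2, n ≥ d, and let ℓ ∈ ℝⁿ be an ordered length vector. Then ℓ is d-regular if and only if the set {n−d+1, n−d+2, …, n−1} is not ℓ-long. -/
/-!
If the block `T = {n-d+1, …, n-1}` is long, then every index `i` is avoided by some long
`(d-1)`-set: `T` itself, or, for `i ∈ T`, the set obtained from `T` by exchanging `i` for `n`,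
which is at least as heavy since `ℓ` is ordered. Conversely, among the `(d-1)`-sets avoiding `n`
the block `T` is the heaviest, so if `T` is not long then every long `(d-1)`-set contains `n`.
Indices in `Fin n` are shifted down by one: `T` is `n - d ≤ i < n - 1` and `n` is `last`.
-/

noncomputable section

open Finset

section CardEq

variable {ι M : Type*} [AddCommMonoid M] [LinearOrder M] [IsOrderedCancelAddMonoid M]

lemma sum_le_sum_of_card_eq_of_forall_le {A B : Finset ι} (f : ι → M)
    (hcard : #A = #B) (hle : ∀ a ∈ A, ∀ b ∈ B, f a ≤ f b) :
    ∑ a ∈ A, f a ≤ ∑ b ∈ B, f b := by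
  rcases B.eq_empty_or_nonempty with rfl | hB
  · rw [card_empty, card_eq_zero] at hcard
    simp [hcard]
  obtain ⟨b₀, hb₀, hmin⟩ := B.exists_min_image f hB
  calc ∑ a ∈ A, f a ≤ #A • f b₀ := sum_le_card_nsmul _ _ _ fun a ha => hle a ha b₀ hb₀
    _ = #B • f b₀ := by rw [hcard]
    _ ≤ ∑ b ∈ B, f b := card_nsmul_le_sum _ _ _ hmin

lemma sum_le_sum_of_card_eq_of_forall_sdiff_le [DecidableEq ι] {J K : Finset ι} (f : ι → M)
    (hcard : #J = #K) (hle : ∀ j ∈ J \ K, ∀ k ∈ K \ J, f j ≤ f k) :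
    ∑ j ∈ J, f j ≤ ∑ k ∈ K, f k :=
  sum_sdiff_le_sum_sdiff.mp <| sum_le_sum_of_card_eq_of_forall_le f (card_sdiff_comm hcard) hle

end CardEq

lemma card_filter_val_mem_Ico {n a b : ℕ} (hb : b ≤ n) :
    #(univ.filter fun i : Fin n => a ≤ (i : ℕ) ∧ (i : ℕ) < b) = b - a := by
  rw [← card_map Fin.valEmbedding, ← Nat.card_Ico a b]
  congr 1
  ext m
  simp only [mem_map, mem_filter, mem_univ, true_and, Fin.valEmbedding_apply, mem_Ico]
  exact ⟨fun ⟨i, hi, hm⟩ => hm ▸ hi, fun hm => ⟨⟨m, by omega⟩, hm, rfl⟩⟩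

section Long

variable {n : ℕ} {ℓ : Fin n → ℝ} {J K : Finset (Fin n)}

lemma long_iff_lt_two_mul_sum : Long ℓ J ↔ ∑ j, ℓ j < 2 * ∑ j ∈ J, ℓ j := by
  have := sum_add_sum_compl J ℓ
  rw [Long, Short, compl_compl]
  constructor <;> intro h <;> linarith

lemma Long.of_sum_le (hJ : Long ℓ J) (hle : ∑ j ∈ J, ℓ j ≤ ∑ k ∈ K, ℓ k) : Long ℓ K := by
  rw [long_iff_lt_two_mul_sum] at hJ ⊢
  linarith

lemma Long.exchange {i m : Fin n} (hJ : Long ℓ J) (hi : i ∈ J) (hm : m ∉ J) (hle : ℓ i ≤ ℓ m) :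
    Long ℓ (insert m (J.erase i)) := by
  refine hJ.of_sum_le ?_
  rw [sum_insert fun h => hm (mem_of_mem_erase h), sum_erase_eq_sub hi]
  linarith

lemma not_dRegular_of_long {d : ℕ} {m : Fin n} (hJ : Long ℓ J) (hcard : #J = d - 1)
    (hm : m ∉ J) (hle : ∀ i ∈ J, ℓ i ≤ ℓ m) : ¬ DRegular d ℓ := by
  rintro ⟨i, hi⟩
  by_cases hiJ : i ∈ J
  · have hcard' : #(insert m (J.erase i)) = d - 1 := by
      rw [card_insert_of_notMem fun h => hm (mem_of_mem_erase h), card_erase_of_mem hiJ,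
        Nat.sub_add_cancel (card_pos.2 ⟨i, hiJ⟩), hcard]
    rcases mem_insert.1 (hi _ hcard' (hJ.exchange hiJ hm (hle i hiJ))) with rfl | h
    · exact hm hiJ
    · exact notMem_erase i J h
  · exact hiJ (hi J hcard hJ)

end Long

theorem stmt4_general (d n : ℕ) (hd : 2 ≤ d) (hn : d ≤ n) (ℓ : Fin n → ℝ)
    (hord : Monotone ℓ) :
    DRegular d ℓ ↔
      ¬ Long ℓ (Finset.univ.filter fun i : Fin n => n - d ≤ (i : ℕ) ∧ (i : ℕ) < n - 1) := by
  set T := univ.filter fun i : Fin n => n - d ≤ (i : ℕ) ∧ (i : ℕ) < n - 1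
  have hmemT (i : Fin n) : i ∈ T ↔ n - d ≤ (i : ℕ) ∧ (i : ℕ) < n - 1 := by simp [T]
  have hTcard : #T = d - 1 := by rw [card_filter_val_mem_Ico (by omega)]; omega
  let last : Fin n := ⟨n - 1, by omega⟩
  have hlastT : last ∉ T := by simp [hmemT, last]
  have hTmax (J : Finset (Fin n)) (hJcard : #J = d - 1) (hlastJ : last ∉ J) :
      ∑ j ∈ J, ℓ j ≤ ∑ t ∈ T, ℓ t := by
    refine sum_le_sum_of_card_eq_of_forall_sdiff_le ℓ (hJcard.trans hTcard.symm)
      fun j hj t ht => hord (Fin.le_def.2 ?_)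
    rw [mem_sdiff, hmemT] at hj ht
    have : (j : ℕ) ≠ n - 1 := fun h => hlastJ (Fin.ext (a := j) (b := last) h ▸ hj.1)
    omega
  refine ⟨fun hreg hTlong => not_dRegular_of_long hTlong hTcard hlastT
    (fun i _ => hord (Fin.le_def.2 (Nat.le_sub_one_of_lt i.2))) hreg, fun hT => ?_⟩
  exact ⟨last, fun J hJcard hJlong =>
    by_contra fun hlastJ => hT (hJlong.of_sum_le (hTmax J hJcard hlastJ))⟩

/-- For `d ≥ 2`, `n ≥ d` and an ordered length vector `ℓ ∈ ℝⁿ`,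
`ℓ` is `d`-regular iff the set `{n-d+1, …, n-1}` (of the `d-1` largest indices below `n`)
is not `ℓ`-long. -/
theorem stmt4 (d n : ℕ) (hd : 2 ≤ d) (hn : d ≤ n) (ℓ : Fin n → ℝ)
    (hpos : ∀ i, 0 < ℓ i) (hord : Monotone ℓ) :
    DRegular d ℓ ↔
      ¬ Long ℓ (Finset.univ.filter fun i : Fin n => n - d ≤ (i : ℕ) ∧ (i : ℕ) < n - 1) :=
  stmt4_general d n hd hn ℓ hord
end
end

section
/- Let n ≥ 3, d = n−1, and let ℓ, ℓ′ ∈ ℝⁿ be ordered generic d-regular length vectors such that {n} is ℓ-long if and only if {n} is ℓ′-long. Then a subset J ⊆ {1,…,n} is ℓ-short if and only if it is ℓ′-short. In particular, there are exactly two chambers of generic (n−1)-regular length vectors in ℝⁿ up to permutation. -/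
noncomputable section

/-! If `ℓₙ` exceeds the sum of all other entries, the short subsets are exactly those avoiding `n`.
Otherwise `{n}` is short, and `(n-1)`-regularity provides an index `i` lying in every long subset
of cardinality `n-2`; so every pair containing `i` is long (its complement, of cardinality `n-2`,
misses `i`), and since `ℓᵢ ≤ ℓₙ` every pair containing `n` is long. Then the short subsets are
`{n}` and the subsets avoiding `n` other than `{1,…,n-1}`. In both cases the chamber depends only
on whether `{n}` is long. -/

variable {n : ℕ} {ℓ : Fin n → ℝ}

lemma short_iff_two_mul_sum_lt (J : Finset (Fin n)) :
    Short ℓ J ↔ 2 * ∑ j ∈ J, ℓ j < ∑ j, ℓ j := by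
  rw [Short, ← Finset.sum_add_sum_compl J ℓ]
  constructor <;> intro <;> linarith

lemma long_iff_sum_lt_two_mul (J : Finset (Fin n)) :
    Long ℓ J ↔ ∑ j, ℓ j < 2 * ∑ j ∈ J, ℓ j := by
  rw [Long, short_iff_two_mul_sum_lt, ← Finset.sum_add_sum_compl J ℓ]
  constructor <;> intro <;> linarith

lemma long_compl_iff (J : Finset (Fin n)) : Long ℓ Jᶜ ↔ Short ℓ J := by
  rw [Long, compl_compl]

lemma Long.not_short {J : Finset (Fin n)} (h : Long ℓ J) : ¬ Short ℓ J := by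
  rw [long_iff_sum_lt_two_mul] at h
  rw [short_iff_two_mul_sum_lt]
  linarith

lemma Long.of_sum_le_s8 {A B : Finset (Fin n)} (h : Long ℓ A)
    (hAB : ∑ j ∈ A, ℓ j ≤ ∑ j ∈ B, ℓ j) : Long ℓ B := by
  rw [long_iff_sum_lt_two_mul] at h ⊢
  linarith

lemma Long.mono (h0 : ∀ i, 0 ≤ ℓ i) {A B : Finset (Fin n)} (h : Long ℓ A) (hAB : A ⊆ B) :
    Long ℓ B :=
  h.of_sum_le_s8 (Finset.sum_le_sum_of_subset_of_nonneg hAB fun i _ _ => h0 i)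

lemma short_iff_notMem_of_long_singleton (h0 : ∀ i, 0 ≤ ℓ i) {m : Fin n}
    (hm : Long ℓ {m}) (J : Finset (Fin n)) : Short ℓ J ↔ m ∉ J := by
  constructor
  · intro hJ hmJ
    exact (hm.mono h0 (Finset.singleton_subset_iff.2 hmJ)).not_short hJ
  · intro hmJ
    rw [← long_compl_iff]
    exact hm.mono h0 (Finset.singleton_subset_iff.2 (Finset.mem_compl.2 hmJ))

lemma short_iff_of_long_pairs (h0 : ∀ i, 0 ≤ ℓ i) {m : Fin n} (hm : Short ℓ {m})
    (hpair : ∀ j ≠ m, Long ℓ {m, j}) (J : Finset (Fin n)) :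
    Short ℓ J ↔ J = {m} ∨ (m ∉ J ∧ J ≠ {m}ᶜ) := by
  constructor
  · intro hJ
    by_cases hmJ : m ∈ J
    · refine .inl (Finset.eq_singleton_iff_unique_mem.2 ⟨hmJ, fun j hj => ?_⟩)
      by_contra hjm
      have hsub : {m, j} ⊆ J := Finset.insert_subset hmJ (Finset.singleton_subset_iff.2 hj)
      exact ((hpair j hjm).mono h0 hsub).not_short hJ
    · refine .inr ⟨hmJ, ?_⟩
      rintro rfl
      exact ((long_compl_iff _).2 hm).not_short hJ
  · rintro (rfl | ⟨hmJ, hJ⟩)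
    · exact hm
    · obtain ⟨j, hjJ, hjm⟩ : ∃ j ∉ J, j ≠ m := by
        by_contra! h
        refine hJ (Finset.ext fun j => ?_)
        rw [Finset.mem_compl, Finset.mem_singleton]
        exact ⟨fun hj hjm => hmJ (hjm ▸ hj), fun hjm => by_contra fun hj => hjm (h j hj)⟩
      rw [← long_compl_iff]
      refine (hpair j hjm).mono h0 (Finset.insert_subset ?_ ?_) <;> simpa

lemma long_pair_of_dRegular (hgen : Generic ℓ) (hreg : DRegular (n - 1) ℓ) {m : Fin n}
    (hmax : ∀ i, ℓ i ≤ ℓ m) {j : Fin n} (hj : j ≠ m) : Long ℓ {m, j} := by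
  obtain ⟨i, hi⟩ := hreg
  have hpair_i : ∀ a b : Fin n, a ≠ b → i ∈ ({a, b} : Finset (Fin n)) → Long ℓ {a, b} := by
    intro a b hab hiab
    refine (hgen _).resolve_left fun hshort => ?_
    have hcard : ({a, b} : Finset (Fin n))ᶜ.card = n - 1 - 1 := by
      rw [Finset.card_compl, Finset.card_pair hab, Fintype.card_fin]; omega
    exact Finset.mem_compl.1 (hi _ hcard ((long_compl_iff _).2 hshort)) hiab
  by_cases him : i = m
  · exact hpair_i m j hj.symm (by simp [him])
  by_cases hij : i = j
  · exact hpair_i m j hj.symm (by simp [hij])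
  refine (hpair_i i j hij (by simp)).of_sum_le_s8 ?_
  rw [Finset.sum_pair hij, Finset.sum_pair hj.symm]
  linarith [hmax i]

lemma short_iff_of_dRegular (h0 : ∀ i, 0 ≤ ℓ i) (hgen : Generic ℓ)
    (hreg : DRegular (n - 1) ℓ) {m : Fin n} (hmax : ∀ i, ℓ i ≤ ℓ m) (J : Finset (Fin n)) :
    Short ℓ J ↔ (Long ℓ {m} ∧ m ∉ J) ∨ (¬ Long ℓ {m} ∧ (J = {m} ∨ (m ∉ J ∧ J ≠ {m}ᶜ))) := by
  by_cases hm : Long ℓ {m}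
  · simp only [hm, short_iff_notMem_of_long_singleton h0 hm, true_and, not_true, false_and,
      or_false]
  · simp only [hm, short_iff_of_long_pairs h0 ((hgen _).resolve_right hm)
      (fun j hj => long_pair_of_dRegular hgen hreg hmax hj), false_and, not_false_eq_true,
      true_and, false_or]

/-- Let `n ≥ 3`, `d = n-1`, and let `ℓ, ℓ'` be ordered generic `d`-regular
length vectors in `ℝⁿ` such that `{n}` is `ℓ`-long iff `{n}` is `ℓ'`-long. Then a subset `J`
is `ℓ`-short iff it is `ℓ'`-short. -/
theorem stmt8 (n : ℕ) (hn : 3 ≤ n) (ℓ ℓ' : Fin n → ℝ)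
    (hpos : ∀ i, 0 < ℓ i) (hpos' : ∀ i, 0 < ℓ' i)
    (hord : Monotone ℓ) (hord' : Monotone ℓ')
    (hgen : Generic ℓ) (hgen' : Generic ℓ')
    (hreg : DRegular (n - 1) ℓ) (hreg' : DRegular (n - 1) ℓ')
    (hiff : Long ℓ ({⟨n - 1, by omega⟩} : Finset (Fin n)) ↔
      Long ℓ' ({⟨n - 1, by omega⟩} : Finset (Fin n))) :
    ∀ J : Finset (Fin n), Short ℓ J ↔ Short ℓ' J := by
  intro J
  set m : Fin n := ⟨n - 1, by omega⟩
  have hlast : ∀ i, i ≤ m := fun i => Fin.le_def.2 (by simp only [m]; omega)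
  rw [short_iff_of_dRegular (fun i => (hpos i).le) hgen hreg (fun i => hord (hlast i)),
    short_iff_of_dRegular (fun i => (hpos' i).le) hgen' hreg' (fun i => hord' (hlast i)), hiff]
end
end

section
/- Let d ≥ 2, n ≥ d, and let ℓ ∈ ℝⁿ be an ordered, generic, d-regular length vector. Then for every subset J ⊆ {1,…,n−1} with |J| ≥ n−d, the set J ∪ {n} is ℓ-long. -/
/-!
Suppose `J ∪ {n}` is not long. By genericity its complement `K` is long; it avoids `n` and has
at most `d - 1` elements, and padding it (positivity) gives a long `(d-1)`-set still avoiding `n`.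
This is impossible: if `i` is the regular index of `ℓ` and `K'` is a long `(d-1)`-set avoiding
the maximal index `n`, then `i ∈ K'` and, since `ℓ` is ordered, exchanging `i` for `n` keeps
`K'` long, producing a long `(d-1)`-set without `i`.
-/

noncomputable section

namespace Long

variable {n : ℕ} {ℓ : Fin n → ℝ} {A B : Finset (Fin n)}

lemma of_sum_le_s9 (h : ∑ j ∈ A, ℓ j ≤ ∑ j ∈ B, ℓ j) (hA : Long ℓ A) : Long ℓ B := by
  unfold Long Short at *
  rw [compl_compl] at *
  linarith [A.sum_add_sum_compl ℓ, B.sum_add_sum_compl ℓ]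

lemma mono_s9 (hℓ : ∀ i, 0 ≤ ℓ i) (hAB : A ⊆ B) (hA : Long ℓ A) : Long ℓ B :=
  of_sum_le_s9 (Finset.sum_le_sum_of_subset_of_nonneg hAB fun i _ _ => hℓ i) hA

lemma insert_erase {m i : Fin n} (hm : ∀ j, ℓ j ≤ ℓ m) (hmA : m ∉ A) (hiA : i ∈ A)
    (hA : Long ℓ A) : Long ℓ (insert m (A.erase i)) := by
  refine of_sum_le_s9 ?_ hA
  rw [Finset.sum_insert fun h => hmA (Finset.mem_of_mem_erase h), ← A.add_sum_erase _ hiA]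
  linarith [hm i]

end Long

lemma Generic.long_compl_of_not_long {n : ℕ} {ℓ : Fin n → ℝ} (hgen : Generic ℓ)
    {J : Finset (Fin n)} (hJ : ¬Long ℓ J) : Long ℓ Jᶜ := by
  rw [Long, compl_compl]
  exact (hgen J).resolve_right hJ

namespace DRegular

variable {d n : ℕ} {ℓ : Fin n → ℝ} {m : Fin n}

lemma mem_of_long_of_card_eq (hreg : DRegular d ℓ) (hm : ∀ j, ℓ j ≤ ℓ m)
    {K : Finset (Fin n)} (hK : Long ℓ K) (hcard : K.card = d - 1) : m ∈ K := by
  by_contra hmK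
  obtain ⟨i, hi⟩ := hreg
  have hiK : i ∈ K := hi K hcard hK
  have hswap_card : (insert m (K.erase i)).card = d - 1 := by
    rw [Finset.card_insert_of_notMem fun h => hmK (Finset.mem_of_mem_erase h),
      Finset.card_erase_of_mem hiK, hcard]
    have := Finset.card_pos.mpr ⟨i, hiK⟩
    omega
  have hi_swap := hi _ hswap_card (hK.insert_erase hm hmK hiK)
  rcases Finset.mem_insert.mp hi_swap with rfl | hi_erase
  · exact hmK hiK
  · exact Finset.notMem_erase i K hi_erase

lemma lt_card_of_long (hreg : DRegular d ℓ) (hdn : d ≤ n) (hℓ : ∀ i, 0 ≤ ℓ i)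
    (hm : ∀ j, ℓ j ≤ ℓ m) {K : Finset (Fin n)} (hK : Long ℓ K) (hmK : m ∉ K) :
    d - 1 < K.card := by
  by_contra! hcard
  have hroom : d - 1 ≤ ({m}ᶜ : Finset (Fin n)).card := by
    rw [Finset.card_compl, Fintype.card_fin, Finset.card_singleton]
    omega
  obtain ⟨K', hKK', hK'm, hK'card⟩ :=
    Finset.exists_subsuperset_card_eq (Finset.subset_compl_singleton.mpr hmK) hcard hroom
  have hmK' := hreg.mem_of_long_of_card_eq hm (hK.mono_s9 hℓ hKK') hK'card
  exact Finset.notMem_compl.mpr (Finset.mem_singleton_self m) (hK'm hmK')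

end DRegular

/-- Let `d ≥ 2`, `n ≥ d`, and let `ℓ ∈ ℝⁿ` be an ordered generic `d`-regular
length vector. Then for every subset `J` of the first `n-1` indices with `|J| ≥ n-d`,
the set `J ∪ {n}` is `ℓ`-long. -/
theorem stmt9 (d n : ℕ) (hd : 2 ≤ d) (hn : d ≤ n) (ℓ : Fin n → ℝ)
    (hpos : ∀ i, 0 < ℓ i) (hord : Monotone ℓ) (hgen : Generic ℓ) (hreg : DRegular d ℓ)
    (J : Finset (Fin n)) (hJ : (⟨n - 1, by omega⟩ : Fin n) ∉ J) (hcard : n - d ≤ J.card) :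
    Long ℓ (insert (⟨n - 1, by omega⟩ : Fin n) J) := by
  set last : Fin n := ⟨n - 1, by omega⟩
  have hmax : ∀ j, ℓ j ≤ ℓ last := fun j => hord (Fin.le_def.mpr (by simp [last]; omega))
  by_contra hshort
  have hlong := hgen.long_compl_of_not_long hshort
  have hlt := hreg.lt_card_of_long hn (fun i => (hpos i).le) hmax hlong (by simp)
  rw [Finset.card_compl, Fintype.card_fin, Finset.card_insert_of_notMem hJ] at hlt
  omega
end
end

section
/- Let d ≥ 2, n ≥ 3, let ℓ ∈ ℝⁿ be a length vector, and fix j ∈ {1,…,n−1}. Then the map deleting the j-th coordinate restricts to a homeomorphism from {x ∈ C_d(ℓ) : x_j = e₁} onto C_d(ℓ^j_+), where ℓ^j_+ = (ℓ_1,…,ℓ̂_j,…,ℓ_{n−1}, ℓ_n + ℓ_j) ∈ ℝ^{n−1}. If moreover ℓ_j < ℓ_n, it also restricts to a homeomorphism from {x ∈ C_d(ℓ) : x_j = −e₁} onto C_d(ℓ^j_−), where ℓ^j_− = (ℓ_1,…,ℓ̂_j,…,ℓ_{n−1}, ℓ_n − ℓ_j) ∈ ℝ^{n−1}. -/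
/-!
On the slice `x_j = v` of `C_d(ℓ)`, moving the term `ℓ_j v` to the right-hand side turns the
closing condition into the closing condition of the remaining links, with right-hand side
`-ℓ_n e₁ - ℓ_j v`. For `v = ±e₁` this is `-(ℓ_n ± ℓ_j) e₁`, the chain space of `ℓ^j_±`.
Deleting and reinserting the `j`-th coordinate are mutually inverse continuous maps.
-/

noncomputable section

/-- The first standard basis vector `e₁` of `ℝ^d`. -/
def e1 (d : ℕ) : Euc d := if h : 0 < d then EuclideanSpace.single ⟨0, h⟩ 1 else 0

/-- The chain space `C_d(ℓ)` of a length vector `ℓ ∈ ℝ^{m+1}`: tuples `(x_1, …, x_m)` of unit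
vectors in `ℝ^d` with `∑_{i=1}^{m} ℓ_i x_i = -ℓ_{m+1} e₁`. -/
def ChainSpace (d m : ℕ) (ℓ : Fin (m + 1) → ℝ) : Set (Fin m → Euc d) :=
  {x | (∀ i, ‖x i‖ = 1) ∧ ∑ i, ℓ i.castSucc • x i = (-ℓ (Fin.last m)) • e1 d}

/-- The length vector `ℓ^j_+ = (ℓ_1, …, ℓ̂_j, …, ℓ_{n-1}, ℓ_n + ℓ_j) ∈ ℝ^{n-1}` for
`ℓ ∈ ℝ^n`, `n = m+3`. -/
def lvPlus (m : ℕ) (ℓ : Fin (m + 3) → ℝ) (j : Fin (m + 2)) : Fin (m + 2) → ℝ :=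
  fun i => if (i : ℕ) = m + 1 then ℓ (Fin.last (m + 2)) + ℓ j.castSucc
    else if (i : ℕ) < (j : ℕ) then ℓ i.castSucc else ℓ i.succ

/-- The length vector `ℓ^j_- = (ℓ_1, …, ℓ̂_j, …, ℓ_{n-1}, ℓ_n - ℓ_j) ∈ ℝ^{n-1}` for
`ℓ ∈ ℝ^n`, `n = m+3`. -/
def lvMinus (m : ℕ) (ℓ : Fin (m + 3) → ℝ) (j : Fin (m + 2)) : Fin (m + 2) → ℝ :=
  fun i => if (i : ℕ) = m + 1 then ℓ (Fin.last (m + 2)) - ℓ j.castSucc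
    else if (i : ℕ) < (j : ℕ) then ℓ i.castSucc else ℓ i.succ

open Fin

namespace Homeomorph

variable {X : Type*} [TopologicalSpace X] {n : ℕ}

def sliceRemoveNth (j : Fin (n + 1)) (v : X) (s : Set (Fin (n + 1) → X)) (t : Set (Fin n → X))
    (h : ∀ y, insertNth j v y ∈ s ↔ y ∈ t) : {x // x ∈ s ∧ x j = v} ≃ₜ t where
  toFun x := ⟨removeNth j x.val, (h _).1 <| by
    simpa only [insertNth_removeNth, ← x.2.2, Function.update_eq_self] using x.2.1⟩
  invFun y := ⟨insertNth j v y.val, (h _).2 y.2, insertNth_apply_same _ _ _⟩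
  left_inv x := by ext1; simp only [← x.2.2, insertNth_self_removeNth]
  right_inv y := Subtype.ext (removeNth_insertNth (α := fun _ => X) j v y.val)
  continuous_toFun := by
    apply Continuous.subtype_mk
    exact continuous_pi fun i => (continuous_apply _).comp continuous_subtype_val
  continuous_invFun := by fun_prop

end Homeomorph

theorem norm_e1 {d : ℕ} (hd : 0 < d) : ‖e1 d‖ = 1 := by
  simp [e1, hd]

theorem insertNth_mem_chainSpace_iff {d m : ℕ} {ℓ : Fin (m + 3) → ℝ} {ℓ' : Fin (m + 2) → ℝ}
    {j : Fin (m + 2)} {v : Euc d} (hv : ‖v‖ = 1)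
    (hℓ' : ∀ i : Fin (m + 1), ℓ' i.castSucc = ℓ (j.succAbove i).castSucc)
    (hlast : (-ℓ' (last (m + 1))) • e1 d = (-ℓ (last (m + 2))) • e1 d - ℓ j.castSucc • v)
    (y : Fin (m + 1) → Euc d) :
    insertNth j v y ∈ ChainSpace d (m + 2) ℓ ↔ y ∈ ChainSpace d (m + 1) ℓ' := by
  simp only [ChainSpace, Set.mem_ofPred_eq, forall_iff_succAbove j, insertNth_apply_same,
    insertNth_apply_succAbove, hv, true_and, sum_univ_succAbove _ j, hℓ', hlast, eq_sub_iff_add_eq']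

theorem lvPlus_castSucc (m : ℕ) (ℓ : Fin (m + 3) → ℝ) (j : Fin (m + 2)) (i : Fin (m + 1)) :
    lvPlus m ℓ j i.castSucc = ℓ (j.succAbove i).castSucc := by
  have hi : ((i.castSucc : Fin (m + 2)) : ℕ) ≠ m + 1 := by simp [i.isLt.ne]
  rw [lvPlus, if_neg hi, succAbove, apply_ite (fun k => ℓ (castSucc k))]
  simp only [val_castSucc, Fin.lt_def, succ_castSucc]

theorem lvMinus_castSucc (m : ℕ) (ℓ : Fin (m + 3) → ℝ) (j : Fin (m + 2)) (i : Fin (m + 1)) :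
    lvMinus m ℓ j i.castSucc = ℓ (j.succAbove i).castSucc := by
  have hi : ((i.castSucc : Fin (m + 2)) : ℕ) ≠ m + 1 := by simp [i.isLt.ne]
  rw [lvMinus, if_neg hi, succAbove, apply_ite (fun k => ℓ (castSucc k))]
  simp only [val_castSucc, Fin.lt_def, succ_castSucc]

theorem stmt11_general (d m : ℕ) (hd : 2 ≤ d) (ℓ : Fin (m + 3) → ℝ)
    (j : Fin (m + 2)) :
    (∃ H : {x : Fin (m + 2) → Euc d // x ∈ ChainSpace d (m + 2) ℓ ∧ x j = e1 d} ≃ₜ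
        ChainSpace d (m + 1) (lvPlus m ℓ j),
      ∀ x, (H x).val = fun i => x.val (j.succAbove i)) ∧
    (ℓ j.castSucc < ℓ (Fin.last (m + 2)) →
      ∃ H : {x : Fin (m + 2) → Euc d // x ∈ ChainSpace d (m + 2) ℓ ∧ x j = -e1 d} ≃ₜ
        ChainSpace d (m + 1) (lvMinus m ℓ j),
      ∀ x, (H x).val = fun i => x.val (j.succAbove i)) := by
  have he1 : ‖e1 d‖ = 1 := norm_e1 (by omega)
  have hplus := insertNth_mem_chainSpace_iff he1 (lvPlus_castSucc m ℓ j)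
    (by simp [lvPlus]; module)
  have hminus := insertNth_mem_chainSpace_iff (v := -e1 d) (by rw [norm_neg, he1])
    (lvMinus_castSucc m ℓ j) (by simp [lvMinus]; module)
  exact ⟨⟨.sliceRemoveNth j _ _ _ hplus, fun _ => rfl⟩,
    fun _ => ⟨.sliceRemoveNth j _ _ _ hminus, fun _ => rfl⟩⟩

/-- Let `d ≥ 2`, `n = m + 3 ≥ 3`, let `ℓ ∈ ℝⁿ` be a length vector and
`j ∈ {1, …, n-1}`. Deleting the `j`-th coordinate restricts to a homeomorphism from
`{x ∈ C_d(ℓ) : x_j = e₁}` onto `C_d(ℓ^j_+)`; and if `ℓ_j < ℓ_n`, it also restricts to a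
homeomorphism from `{x ∈ C_d(ℓ) : x_j = -e₁}` onto `C_d(ℓ^j_-)`. -/
theorem stmt11 (d m : ℕ) (hd : 2 ≤ d) (ℓ : Fin (m + 3) → ℝ) (hpos : ∀ i, 0 < ℓ i)
    (j : Fin (m + 2)) :
    (∃ H : {x : Fin (m + 2) → Euc d // x ∈ ChainSpace d (m + 2) ℓ ∧ x j = e1 d} ≃ₜ
        ChainSpace d (m + 1) (lvPlus m ℓ j),
      ∀ x, (H x).val = fun i => x.val (j.succAbove i)) ∧
    (ℓ j.castSucc < ℓ (Fin.last (m + 2)) →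
      ∃ H : {x : Fin (m + 2) → Euc d // x ∈ ChainSpace d (m + 2) ℓ ∧ x j = -e1 d} ≃ₜ
        ChainSpace d (m + 1) (lvMinus m ℓ j),
      ∀ x, (H x).val = fun i => x.val (j.succAbove i)) :=
  stmt11_general d m hd ℓ j
end
end

section
/- Let ℓ ∈ ℝⁿ be a length vector and let 2 ≤ k < d. The map induced by the standard inclusion ℝ^k ⊆ ℝ^d sends N_k(ℓ) = {x ∈ (S^{k−1})ⁿ : Σ ℓ_i x_i = 0}/O(k) to M_d(ℓ) = {x ∈ (S^{d−1})ⁿ : Σ ℓ_i x_i = 0}/SO(d) well-definedly and injectively, and its image is exactly the set of points of M_d(ℓ) of rank at most k. -/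
noncomputable section

/-- Configurations: `n`-tuples of unit vectors in `ℝ^d` with `∑ ℓᵢ xᵢ = 0`. -/
def PolygonConfig (d n : ℕ) (ℓ : Fin n → ℝ) : Set (Fin n → Euc d) :=
  {x | (∀ i, ‖x i‖ = 1) ∧ ∑ i, ℓ i • x i = 0}

/-- A linear isometry of `ℝ^d` belongs to `SO(d)` iff it has determinant one. -/
def IsSO {d : ℕ} (A : Euc d ≃ₗᵢ[ℝ] Euc d) : Prop :=
  LinearMap.det (A.toLinearEquiv : Euc d →ₗ[ℝ] Euc d) = 1

/-- Two configurations are identified in the moduli space iff they differ by the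
diagonal action of `SO(d)`. -/
def ModuliRel (d n : ℕ) (ℓ : Fin n → ℝ) (x y : PolygonConfig d n ℓ) : Prop :=
  ∃ A : Euc d ≃ₗᵢ[ℝ] Euc d, IsSO A ∧ ∀ i, A (x.val i) = y.val i

/-- The moduli space `M_d(ℓ)`, with the quotient topology. -/
abbrev ModuliSpace (d n : ℕ) (ℓ : Fin n → ℝ) : Type := Quot (ModuliRel d n ℓ)

/-- Two configurations are identified in `N_k(ℓ)` iff they differ by the diagonal action of
the full orthogonal group `O(k)` (an arbitrary linear isometry). -/
def NRel (k n : ℕ) (ℓ : Fin n → ℝ) (x y : PolygonConfig k n ℓ) : Prop :=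
  ∃ A : Euc k ≃ₗᵢ[ℝ] Euc k, ∀ i, A (x.val i) = y.val i

/-- The space `N_k(ℓ)`, the quotient of the configurations in `ℝ^k` by `O(k)`. -/
abbrev NSpace (k n : ℕ) (ℓ : Fin n → ℝ) : Type := Quot (NRel k n ℓ)

/-- The standard inclusion `ℝ^k ⊆ ℝ^d` as the first `k` coordinates. -/
def inclEuc (k d : ℕ) : Euc k → Euc d :=
  fun v => (WithLp.equiv 2 (Fin d → ℝ)).symm
    (fun i : Fin d => if h : (i : ℕ) < k then v ⟨i, h⟩ else 0)

/-- The rank of a configuration: the dimension of the span of its vectors. -/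
def configRank (d n : ℕ) (x : Fin n → Euc d) : ℕ :=
  Module.finrank ℝ (Submodule.span ℝ (Set.range x))
/-!
Configurations in `ℝ^d` differ by an element of `O(d)` exactly when they have the same Gram
matrix, and the inclusion `ℝ^k ⊆ ℝ^d` preserves Gram matrices. A configuration of rank at most `k`
has the Gram matrix of a configuration in `ℝ^k`, by an isometric embedding of its span into `ℝ^k`.
Since `k < d`, composing with a reflection in a hyperplane containing `ℝ^k` turns the `O(d)`
element moving one configuration onto the image of the other into an element of `SO(d)`.
-/

open Module

theorem inclEuc_apply (k d : ℕ) (v : Euc k) (i : Fin d) :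
    inclEuc k d v i = if h : (i : ℕ) < k then v ⟨i, h⟩ else 0 := rfl

theorem norm_inclEuc {k d : ℕ} (h : k ≤ d) (v : Euc k) : ‖inclEuc k d v‖ = ‖v‖ := by
  obtain ⟨m, rfl⟩ := Nat.exists_eq_add_of_le h
  simp [EuclideanSpace.norm_eq, Fin.sum_univ_add, inclEuc_apply]

def inclEucLinearIsometry {k d : ℕ} (h : k ≤ d) : Euc k →ₗᵢ[ℝ] Euc d where
  toFun := inclEuc k d
  map_add' v w := by ext i; simp only [inclEuc_apply, PiLp.add_apply]; split_ifs <;> simp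
  map_smul' c v := by ext i; simp only [inclEuc_apply, PiLp.smul_apply]; split_ifs <;> simp
  norm_map' := norm_inclEuc h

theorem finrank_range_inclEucLinearIsometry {k d : ℕ} (h : k ≤ d) :
    finrank ℝ (LinearMap.range (inclEucLinearIsometry h).toLinearMap) = k := by
  rw [LinearMap.finrank_range_of_inj (inclEucLinearIsometry h).injective,
    finrank_euclideanSpace_fin]

theorem range_inclEucLinearIsometry_ne_top {k d : ℕ} (h : k < d) :
    LinearMap.range (inclEucLinearIsometry h.le).toLinearMap ≠ ⊤ := by
  intro htop
  have := finrank_range_inclEucLinearIsometry h.le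
  rw [htop, finrank_top, finrank_euclideanSpace_fin] at this
  omega

theorem configRank_inclEuc_le {k d n : ℕ} (h : k ≤ d) (x : Fin n → Euc k) :
    configRank d n (fun i => inclEuc k d (x i)) ≤ k := by
  refine (Submodule.finrank_mono (Submodule.span_le.mpr ?_)).trans_eq
    (finrank_range_inclEucLinearIsometry h)
  rintro _ ⟨i, rfl⟩
  exact ⟨x i, rfl⟩

section Gram

variable {ι E F : Type*} [NormedAddCommGroup E] [InnerProductSpace ℝ E]
  [NormedAddCommGroup F] [InnerProductSpace ℝ F]

theorem Matrix.gram_comp_linearIsometry (f : E →ₗᵢ[ℝ] F) (x : ι → E) :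
    Matrix.gram ℝ (fun i => f (x i)) = Matrix.gram ℝ x := by
  ext i j
  simp

theorem norm_sum_smul_eq_of_gram_eq [Fintype ι] {x y : ι → E}
    (h : Matrix.gram ℝ x = Matrix.gram ℝ y) (c : ι → ℝ) :
    ‖∑ i, c i • x i‖ = ‖∑ i, c i • y i‖ := by
  have key := Matrix.star_dotProduct_gram_mulVec (𝕜 := ℝ) x c c
  rw [h, Matrix.star_dotProduct_gram_mulVec] at key
  rw [norm_eq_sqrt_real_inner, norm_eq_sqrt_real_inner, key]

theorem exists_linearIsometryEquiv_of_gram_eq [Fintype ι] [FiniteDimensional ℝ E]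
    {x y : ι → E} (h : Matrix.gram ℝ x = Matrix.gram ℝ y) :
    ∃ A : E ≃ₗᵢ[ℝ] E, ∀ i, A (x i) = y i := by
  classical
  let f := Fintype.linearCombination ℝ x
  let g := Fintype.linearCombination ℝ y
  have hfg : ∀ c, ‖f c‖ = ‖g c‖ := fun c => by
    simp only [f, g, Fintype.linearCombination_apply, norm_sum_smul_eq_of_gram_eq h]
  have hker : LinearMap.ker f ≤ LinearMap.ker g := fun c hc => by
    rw [LinearMap.mem_ker, ← norm_eq_zero, ← hfg, norm_eq_zero, ← LinearMap.mem_ker]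
    exact hc
  -- `∑ cᵢ xᵢ ↦ ∑ cᵢ yᵢ` is a well-defined isometry of `span x` into `E`; extend it to `E`.
  let L₀ := (LinearMap.ker f).liftQ g hker ∘ₗ f.quotKerEquivRange.symm.toLinearMap
  have hL₀ : ∀ c, L₀ ⟨f c, LinearMap.mem_range_self f c⟩ = g c := fun c => by
    simp only [L₀, LinearMap.coe_comp, LinearEquiv.coe_coe, Function.comp_apply,
      LinearMap.quotKerEquivRange_symm_apply_image, Submodule.mkQ_apply, Submodule.liftQ_apply]
  have hnorm : ∀ s, ‖L₀ s‖ = ‖s‖ := by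
    rintro ⟨_, c, rfl⟩
    rw [hL₀, ← hfg, Submodule.coe_norm]
  let L : LinearMap.range f →ₗᵢ[ℝ] E := ⟨L₀, hnorm⟩
  refine ⟨L.extend.toLinearIsometryEquiv rfl, fun i => ?_⟩
  have hx : f (Pi.single i 1) = x i := by simp [f, Fintype.linearCombination_apply_single]
  have hy : g (Pi.single i 1) = y i := by simp [g, Fintype.linearCombination_apply_single]
  rw [LinearIsometry.toLinearIsometryEquiv_apply, ← hx, ← hy, ← hL₀]
  exact L.extend_apply ⟨f (Pi.single i 1), LinearMap.mem_range_self f _⟩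

theorem exists_gram_eq_of_finrank_span_le [Fintype ι] {z : ι → E} {k : ℕ}
    (h : finrank ℝ (Submodule.span ℝ (Set.range z)) ≤ k) :
    ∃ x : ι → Euc k, Matrix.gram ℝ x = Matrix.gram ℝ z := by
  let S := Submodule.span ℝ (Set.range z)
  have : FiniteDimensional ℝ S := FiniteDimensional.span_of_finite ℝ (Set.finite_range z)
  let e := (inclEucLinearIsometry h).comp (stdOrthonormalBasis ℝ S).repr.toLinearIsometry
  let z' : ι → S := fun i => ⟨z i, Submodule.subset_span ⟨i, rfl⟩⟩
  refine ⟨fun i => e (z' i), ?_⟩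
  rw [Matrix.gram_comp_linearIsometry]
  ext i j
  simp [z']

end Gram

section Det

variable {E : Type*} [NormedAddCommGroup E] [InnerProductSpace ℝ E] [FiniteDimensional ℝ E]

theorem LinearIsometryEquiv.det_eq_one_or_neg_one (A : E ≃ₗᵢ[ℝ] E) :
    LinearMap.det (A.toLinearEquiv : E →ₗ[ℝ] E) = 1 ∨
      LinearMap.det (A.toLinearEquiv : E →ₗ[ℝ] E) = -1 := by
  let b := stdOrthonormalBasis ℝ E
  have h : b.toBasis.det (b.map A) = LinearMap.det (A.toLinearEquiv : E →ₗ[ℝ] E) := by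
    have hb : ⇑(b.map A) = (A.toLinearEquiv : E →ₗ[ℝ] E) ∘ ⇑b.toBasis := by
      funext i
      simp
    rw [hb, Module.Basis.det_comp, Module.Basis.det_self, mul_one]
  rw [← h]
  exact b.det_to_matrix_orthonormalBasis_real _

theorem exists_det_eq_one_eq_of_map_mem (K : Submodule ℝ E) (hK : K ≠ ⊤) (A : E ≃ₗᵢ[ℝ] E) :
    ∃ C : E ≃ₗᵢ[ℝ] E, LinearMap.det (C.toLinearEquiv : E →ₗ[ℝ] E) = 1 ∧
      ∀ w, A w ∈ K → C w = A w := by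
  rcases A.det_eq_one_or_neg_one with hA | hA
  · exact ⟨A, hA, fun _ _ => rfl⟩
  obtain ⟨v, hvK, hv⟩ := (Submodule.ne_bot_iff Kᗮ).mp (Submodule.orthogonal_eq_bot_iff.not.mpr hK)
  let H := (ℝ ∙ v)ᗮ
  have hKH : K ≤ H := K.le_orthogonal_orthogonal.trans <|
    Submodule.orthogonal_le <| (Submodule.span_singleton_le_iff_mem _ _).mpr hvK
  refine ⟨A.trans H.reflection, ?_, fun w hw => H.reflection_mem_subspace_eq_self (hKH hw)⟩
  have hdet : LinearMap.det (H.reflection.toLinearEquiv : E →ₗ[ℝ] E) = -1 := by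
    have := H.det_reflection
    rwa [Submodule.orthogonal_orthogonal, finrank_span_singleton hv, pow_one] at this
  change LinearMap.det ((H.reflection.toLinearEquiv : E →ₗ[ℝ] E) ∘ₗ
    (A.toLinearEquiv : E →ₗ[ℝ] E)) = 1
  rw [LinearMap.det_comp, hdet, hA]
  norm_num

end Det

theorem exists_isSO_map_eq_of_gram_eq {ι : Type*} [Fintype ι] {d : ℕ} {K : Submodule ℝ (Euc d)}
    (hK : K ≠ ⊤) {x y : ι → Euc d} (h : Matrix.gram ℝ x = Matrix.gram ℝ y) (hy : ∀ i, y i ∈ K) :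
    ∃ C : Euc d ≃ₗᵢ[ℝ] Euc d, IsSO C ∧ ∀ i, C (x i) = y i := by
  obtain ⟨A, hA⟩ := exists_linearIsometryEquiv_of_gram_eq h
  obtain ⟨C, hC, hCA⟩ := exists_det_eq_one_eq_of_map_mem K hK A
  exact ⟨C, hC, fun i => (hCA _ (hA i ▸ hy i)).trans (hA i)⟩

theorem comp_mem_polygonConfig_iff {a b n : ℕ} {ℓ : Fin n → ℝ} (f : Euc a →ₗᵢ[ℝ] Euc b)
    {x : Fin n → Euc a} :
    (fun i => f (x i)) ∈ PolygonConfig b n ℓ ↔ x ∈ PolygonConfig a n ℓ := by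
  have hsum : ∑ i, ℓ i • f (x i) = f (∑ i, ℓ i • x i) := by simp [map_sum]
  simp only [PolygonConfig, Set.mem_ofPred_eq, f.norm_map, hsum,
    (map_eq_zero_iff f f.injective)]

theorem gram_eq_of_quot_mk_eq {d n : ℕ} {ℓ : Fin n → ℝ} {z w : PolygonConfig d n ℓ}
    (h : Quot.mk (ModuliRel d n ℓ) z = Quot.mk _ w) :
    Matrix.gram ℝ z.val = Matrix.gram ℝ w.val := by
  let G : ModuliSpace d n ℓ → Matrix (Fin n) (Fin n) ℝ :=
    Quot.lift (fun z => Matrix.gram ℝ z.val) fun z w ⟨A, _, hA⟩ => by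
      rw [← funext hA]
      exact (Matrix.gram_comp_linearIsometry A.toLinearIsometry z.val).symm
  exact congrArg G h

section

variable {k d n : ℕ} {ℓ : Fin n → ℝ}

def inclConfig (h : k ≤ d) (x : PolygonConfig k n ℓ) : PolygonConfig d n ℓ :=
  ⟨fun i => inclEuc k d (x.val i), (comp_mem_polygonConfig_iff (inclEucLinearIsometry h)).2 x.2⟩

theorem gram_inclConfig (h : k ≤ d) (x : PolygonConfig k n ℓ) :
    Matrix.gram ℝ (inclConfig h x).val = Matrix.gram ℝ x.val :=
  Matrix.gram_comp_linearIsometry (inclEucLinearIsometry h) x.val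

theorem quot_mk_inclConfig_eq_of_nRel (h : k < d) {x y : PolygonConfig k n ℓ}
    (hxy : NRel k n ℓ x y) :
    Quot.mk (ModuliRel d n ℓ) (inclConfig h.le x) = Quot.mk _ (inclConfig h.le y) := by
  obtain ⟨A, hA⟩ := hxy
  have hgram : Matrix.gram ℝ (inclConfig h.le x).val = Matrix.gram ℝ (inclConfig h.le y).val := by
    rw [gram_inclConfig, gram_inclConfig, ← funext hA]
    exact (Matrix.gram_comp_linearIsometry A.toLinearIsometry x.val).symm
  obtain ⟨C, hC, hCxy⟩ :=
    exists_isSO_map_eq_of_gram_eq (range_inclEucLinearIsometry_ne_top h) hgram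
      fun i => LinearMap.mem_range_self _ (y.val i)
  exact Quot.sound ⟨C, hC, hCxy⟩

theorem nRel_of_quot_mk_inclConfig_eq (h : k ≤ d) {x y : PolygonConfig k n ℓ}
    (hxy : Quot.mk (ModuliRel d n ℓ) (inclConfig h x) = Quot.mk _ (inclConfig h y)) :
    NRel k n ℓ x y := by
  have hgram := gram_eq_of_quot_mk_eq hxy
  rw [gram_inclConfig, gram_inclConfig] at hgram
  exact exists_linearIsometryEquiv_of_gram_eq hgram

theorem exists_quot_mk_inclConfig_eq_of_configRank_le (h : k < d) (z : PolygonConfig d n ℓ)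
    (hz : configRank d n z.val ≤ k) :
    ∃ x : PolygonConfig k n ℓ, Quot.mk (ModuliRel d n ℓ) (inclConfig h.le x) = Quot.mk _ z := by
  obtain ⟨x, hx⟩ := exists_gram_eq_of_finrank_span_le hz
  let incl := inclEucLinearIsometry h.le
  obtain ⟨C, hC, hCz⟩ := exists_isSO_map_eq_of_gram_eq (range_inclEucLinearIsometry_ne_top h)
    (x := z.val) (y := fun i => incl (x i)) (by rw [Matrix.gram_comp_linearIsometry, hx])
    fun i => LinearMap.mem_range_self _ (x i)
  have hxconf : x ∈ PolygonConfig k n ℓ := by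
    rw [← comp_mem_polygonConfig_iff incl, ← funext hCz]
    exact (comp_mem_polygonConfig_iff C.toLinearIsometry).2 z.2
  exact ⟨⟨x, hxconf⟩, (Quot.sound ⟨C, hC, hCz⟩).symm⟩

end

theorem stmt14_general (k d n : ℕ) (hkd : k < d) (ℓ : Fin n → ℝ) :
    (∀ x ∈ PolygonConfig k n ℓ, (fun i => inclEuc k d (x i)) ∈ PolygonConfig d n ℓ) ∧
    ∃ Φ : NSpace k n ℓ → ModuliSpace d n ℓ,
      (∀ (x : PolygonConfig k n ℓ) (y : PolygonConfig d n ℓ),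
        (∀ i, y.val i = inclEuc k d (x.val i)) →
          Φ (Quot.mk _ x) = Quot.mk _ y) ∧
      Function.Injective Φ ∧
      Set.range Φ = {p | ∃ z : PolygonConfig d n ℓ,
        Quot.mk _ z = p ∧ configRank d n z.val ≤ k} := by
  refine ⟨fun x hx => (comp_mem_polygonConfig_iff (inclEucLinearIsometry hkd.le)).2 hx,
    Quot.lift (fun x => Quot.mk _ (inclConfig hkd.le x))
      fun _ _ => quot_mk_inclConfig_eq_of_nRel hkd,
    fun x y hy => ?_, ?_, ?_⟩
  · exact congrArg _ (Subtype.ext (funext fun i => (hy i).symm))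
  · rintro ⟨x⟩ ⟨y⟩ hxy
    exact Quot.sound (nRel_of_quot_mk_inclConfig_eq hkd.le hxy)
  · ext p
    constructor
    · rintro ⟨⟨x⟩, rfl⟩
      exact ⟨_, rfl, configRank_inclEuc_le hkd.le x.val⟩
    · rintro ⟨z, rfl, hz⟩
      obtain ⟨x, hx⟩ := exists_quot_mk_inclConfig_eq_of_configRank_le hkd z hz
      exact ⟨Quot.mk _ x, hx⟩

/-- For `2 ≤ k < d`, the standard inclusion `ℝ^k ⊆ ℝ^d` sends
configurations to configurations, and induces a well-defined injective map
`N_k(ℓ) → M_d(ℓ)` whose image is exactly the set of points of rank at most `k`. -/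
theorem stmt14 (k d n : ℕ) (hk : 2 ≤ k) (hkd : k < d) (ℓ : Fin n → ℝ)
    (hpos : ∀ i, 0 < ℓ i) :
    (∀ x ∈ PolygonConfig k n ℓ, (fun i => inclEuc k d (x i)) ∈ PolygonConfig d n ℓ) ∧
    ∃ Φ : NSpace k n ℓ → ModuliSpace d n ℓ,
      (∀ (x : PolygonConfig k n ℓ) (y : PolygonConfig d n ℓ),
        (∀ i, y.val i = inclEuc k d (x.val i)) →
          Φ (Quot.mk _ x) = Quot.mk _ y) ∧
      Function.Injective Φ ∧
      Set.range Φ = {p | ∃ z : PolygonConfig d n ℓ,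
        Quot.mk _ z = p ∧ configRank d n z.val ≤ k} :=
  stmt14_general k d n hkd ℓ
end
end
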